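/- Let (P_t) be a contraction semigroup on C_b(X) with generator L̄ defined via its resolvent, and let D ⊆ D(L̄) contain (λ − L̄)^{-1} E for some λ > 0 and a set E ⊆ C_b(X) that is π-dense in C_b(X) (every f ∈ C_b(X) is a pointwise limit of a uniformly bounded sequence from E). Then D is a π-core for L̄: for every φ ∈ D(L̄) there exist φ_n ∈ D with φ_n → φ and L̄φ_n → L̄φ pointwise, with sup_n (‖φ_n‖_∞ + ‖L̄φ_n‖_∞) < ∞. -/

import Mathlib

open Filter
open scoped BoundedContinuousFunction Topology

/-!
Take `f := l • φ - L̄ φ`, so that `R f = φ`, approximate `f` boundedly pointwise by `fₙ ∈ E` and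
put `φₙ := R fₙ ∈ D`. The resolvent identity `L̄ (R g) = l • R g - g` expresses `L̄ φₙ` through
`φₙ` and `fₙ`, so both the uniform bounds and the pointwise convergence of `L̄ φₙ` are inherited
from those of `R fₙ` and `fₙ`.
-/

namespace BoundedContinuousFunction

variable {X : Type*} [TopologicalSpace X] {Lbar R : (X →ᵇ ℝ) → (X →ᵇ ℝ)} {l : ℝ}

theorem generator_resolvent_eq (hRres : ∀ f, l • R f - Lbar (R f) = f) (f : X →ᵇ ℝ) :
    Lbar (R f) = l • R f - f :=
  eq_sub_of_add_eq (sub_eq_iff_eq_add'.mp (hRres f)).symm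

theorem norm_generator_resolvent_le (hl : 0 < l) (hRres : ∀ f, l • R f - Lbar (R f) = f)
    (hRbound : ∀ f, ‖R f‖ ≤ ‖f‖ / l) (f : X →ᵇ ℝ) :
    ‖Lbar (R f)‖ ≤ 2 * ‖f‖ :=
  calc ‖Lbar (R f)‖ = ‖l • R f - f‖ := by rw [generator_resolvent_eq hRres]
    _ ≤ ‖l • R f‖ + ‖f‖ := norm_sub_le _ _
    _ = l * ‖R f‖ + ‖f‖ := by rw [norm_smul, Real.norm_of_nonneg hl.le]
    _ ≤ l * (‖f‖ / l) + ‖f‖ := by gcongr; exact hRbound f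
    _ = 2 * ‖f‖ := by field_simp; ring

theorem tendsto_generator_resolvent_apply (hRres : ∀ f, l • R f - Lbar (R f) = f)
    {fn : ℕ → X →ᵇ ℝ} {f : X →ᵇ ℝ} (hfn : ∀ x, Tendsto (fun n => fn n x) atTop (𝓝 (f x)))
    (hR : ∀ x, Tendsto (fun n => R (fn n) x) atTop (𝓝 (R f x))) (x : X) :
    Tendsto (fun n => Lbar (R (fn n)) x) atTop (𝓝 (Lbar (R f) x)) := by
  simp only [generator_resolvent_eq hRres, sub_apply, smul_apply, smul_eq_mul]
  exact ((hR x).const_mul l).sub (hfn x)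

end BoundedContinuousFunction

open BoundedContinuousFunction in
theorem stmt_19_general {X : Type*} [MetricSpace X]
    (Dom : Set (X →ᵇ ℝ)) (Lbar : (X →ᵇ ℝ) → (X →ᵇ ℝ))
    (l : ℝ) (hl : 0 < l) (R : (X →ᵇ ℝ) → (X →ᵇ ℝ))
    (hRres : ∀ f, l • R f - Lbar (R f) = f)
    (hRinv : ∀ φ ∈ Dom, R (l • φ - Lbar φ) = φ)
    (hRbound : ∀ f, ‖R f‖ ≤ ‖f‖ / l)
    (hRpi : ∀ (fn : ℕ → (X →ᵇ ℝ)) (f : X →ᵇ ℝ),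
      (∀ x, Tendsto (fun n => fn n x) atTop (𝓝 (f x))) →
      (∃ C : ℝ, ∀ n, ‖fn n‖ ≤ C) →
      ∀ x, Tendsto (fun n => R (fn n) x) atTop (𝓝 (R f x)))
    (E : Set (X →ᵇ ℝ))
    (hEdense : ∀ f : X →ᵇ ℝ, ∃ fn : ℕ → (X →ᵇ ℝ),
      (∀ n, fn n ∈ E) ∧ (∃ C : ℝ, ∀ n, ‖fn n‖ ≤ C) ∧
        ∀ x, Tendsto (fun n => fn n x) atTop (𝓝 (f x)))
    (D : Set (X →ᵇ ℝ))
    (hDE : ∀ e ∈ E, R e ∈ D) :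
    ∀ φ ∈ Dom, ∃ φn : ℕ → (X →ᵇ ℝ),
      (∀ n, φn n ∈ D) ∧
      (∃ C : ℝ, ∀ n, ‖φn n‖ + ‖Lbar (φn n)‖ ≤ C) ∧
      (∀ x, Tendsto (fun n => φn n x) atTop (𝓝 (φ x))) ∧
      (∀ x, Tendsto (fun n => Lbar (φn n) x) atTop (𝓝 (Lbar φ x))) := by
  intro φ hφ
  obtain ⟨fn, hfnE, ⟨C, hC⟩, hfn⟩ := hEdense (l • φ - Lbar φ)
  have hRfn := hRpi fn _ hfn ⟨C, hC⟩
  have hLRfn := tendsto_generator_resolvent_apply hRres hfn hRfn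
  rw [hRinv φ hφ] at hRfn hLRfn
  refine ⟨fun n => R (fn n), fun n => hDE _ (hfnE n), ⟨C / l + 2 * C, fun n => ?_⟩, hRfn, hLRfn⟩
  exact add_le_add ((hRbound _).trans (by gcongr; exact hC n))
    ((norm_generator_resolvent_le hl hRres hRbound _).trans (by gcongr; exact hC n))

/-- if `D ⊆ D(L̄)` contains `(l − L̄)^{-1} E` for a π-dense set `E`, then
`D` is a π-core for the generator `L̄`.  Here `Dom` is the domain of `L̄`, `R` is the
resolvent `(l − L̄)^{-1}`, which is bounded by `1/l`, inverts `l − L̄` on `Dom`, and maps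
π-convergent sequences to π-convergent sequences (properties of the Laplace transform of
a Feller contraction semigroup). -/
theorem stmt_19 {X : Type*} [MetricSpace X]
    (Dom : Set (X →ᵇ ℝ)) (Lbar : (X →ᵇ ℝ) → (X →ᵇ ℝ))
    (l : ℝ) (hl : 0 < l) (R : (X →ᵇ ℝ) → (X →ᵇ ℝ))
    (hRmem : ∀ f, R f ∈ Dom)
    (hRres : ∀ f, l • R f - Lbar (R f) = f)
    (hRinv : ∀ φ ∈ Dom, R (l • φ - Lbar φ) = φ)
    (hRbound : ∀ f, ‖R f‖ ≤ ‖f‖ / l)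
    (hRpi : ∀ (fn : ℕ → (X →ᵇ ℝ)) (f : X →ᵇ ℝ),
      (∀ x, Tendsto (fun n => fn n x) atTop (𝓝 (f x))) →
      (∃ C : ℝ, ∀ n, ‖fn n‖ ≤ C) →
      ∀ x, Tendsto (fun n => R (fn n) x) atTop (𝓝 (R f x)))
    (E : Set (X →ᵇ ℝ))
    (hEdense : ∀ f : X →ᵇ ℝ, ∃ fn : ℕ → (X →ᵇ ℝ),
      (∀ n, fn n ∈ E) ∧ (∃ C : ℝ, ∀ n, ‖fn n‖ ≤ C) ∧
        ∀ x, Tendsto (fun n => fn n x) atTop (𝓝 (f x)))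
    (D : Set (X →ᵇ ℝ)) (hD : D ⊆ Dom)
    (hDE : ∀ e ∈ E, R e ∈ D) :
    ∀ φ ∈ Dom, ∃ φn : ℕ → (X →ᵇ ℝ),
      (∀ n, φn n ∈ D) ∧
      (∃ C : ℝ, ∀ n, ‖φn n‖ + ‖Lbar (φn n)‖ ≤ C) ∧
      (∀ x, Tendsto (fun n => φn n x) atTop (𝓝 (φ x))) ∧
      (∀ x, Tendsto (fun n => Lbar (φn n) x) atTop (𝓝 (Lbar φ x))) :=
  stmt_19_general Dom Lbar l hl R hRres hRinv hRbound hRpi E hEdense D hDE
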